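/- arXiv:1409.3372 — 4 statements merged into one kernel-verified Lean document; each statement's English description precedes it below -/
import Mathlib

section
/- Let Δ be an irreducible reduced crystallographic root system, normalized so that every long root has squared length 2, and assume every root α satisfies (α,α) = 1 or (α,α) = 2 (i.e., Δ is not of type G2). Let δ ∈ Δ be a long root and set W_δ = {α ∈ Δ : δ − α ∈ Δ}. Then for η₁, η₂ ∈ W_δ, the sum η₁ + η₂ is a root if and only if η₁ + η₂ = δ. -/
open scoped RealInnerProductSpace

private lemma key_inner {E : Type*} [NormedAddCommGroup E] [InnerProductSpace ℝ E]
    (δ η : E) (hδ2 : ⟪δ, δ⟫ = 2) (n : ℤ) (hn : ⟪η, δ⟫ = (n : ℝ))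
    (ha : ⟪η, η⟫ = 1 ∨ ⟪η, η⟫ = 2)
    (hb : ⟪δ - η, δ - η⟫ = 1 ∨ ⟪δ - η, δ - η⟫ = 2) :
    ⟪η, δ⟫ = 1 := by
  have hexp : ⟪δ - η, δ - η⟫ = ⟪δ, δ⟫ - 2 * ⟪η, δ⟫ + ⟪η, η⟫ := by
    simp only [inner_sub_left, inner_sub_right, real_inner_comm η δ]
    ring
  have h2n : (2 * n : ℝ) = 2 + ⟪η, η⟫ - ⟪δ - η, δ - η⟫ := by
    rw [hδ2] at hexp; rw [hn] at hexp; linarith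
  have hn1 : n = 1 := by
    rcases ha with ha | ha <;> rcases hb with hb | hb <;> rw [ha, hb] at h2n
    all_goals
      first
      | (have h' : (2 * n : ℤ) = 2 := by
           have : (2 * n : ℝ) = 2 := by linarith
           exact_mod_cast this
         omega)
      | (have h' : (2 * n : ℤ) = 1 := by
           have : (2 * n : ℝ) = 1 := by linarith
           exact_mod_cast this
         omega)
      | (have h' : (2 * n : ℤ) = 3 := by
           have : (2 * n : ℝ) = 3 := by linarith
           exact_mod_cast this
         omega)
  rw [hn, hn1]; norm_num

/-- In an irreducible reduced crystallographic root system
(normalized so long roots have squared length 2, no G₂), if `δ` is a long root and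
`η₁, η₂ ∈ W_δ = {α ∈ Δ : δ - α ∈ Δ}`, then `η₁ + η₂` is a root iff `η₁ + η₂ = δ`. -/
theorem sum_in_Wdelta_is_root_iff
    {E : Type*} [NormedAddCommGroup E] [InnerProductSpace ℝ E] [FiniteDimensional ℝ E]
    (Δ : Set E) (hfin : Δ.Finite)
    (hspan : Submodule.span ℝ Δ = ⊤)
    (h0 : (0 : E) ∉ Δ)
    (hred : ∀ α ∈ Δ, ∀ c : ℝ, c • α ∈ Δ → c • α = α ∨ c • α = -α)
    (hint : ∀ α ∈ Δ, ∀ β ∈ Δ, ∃ n : ℤ, 2 * ⟪β, α⟫ / ⟪α, α⟫ = (n : ℝ))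
    (hrefl : ∀ α ∈ Δ, ∀ β ∈ Δ, β - (2 * ⟪β, α⟫ / ⟪α, α⟫) • α ∈ Δ)
    (hirr : ¬ ∃ A B : Set E, A.Nonempty ∧ B.Nonempty ∧ A ∪ B = Δ ∧ A ∩ B = ∅ ∧
      ∀ a ∈ A, ∀ b ∈ B, ⟪a, b⟫ = 0)
    (hnorm : ∀ δ ∈ Δ, (∀ α ∈ Δ, ⟪α, α⟫ ≤ ⟪δ, δ⟫) → ⟪δ, δ⟫ = 2)
    (hlen : ∀ α ∈ Δ, ⟪α, α⟫ = 1 ∨ ⟪α, α⟫ = 2)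
    (δ : E) (hδ : δ ∈ Δ) (hδlong : ∀ β ∈ Δ, ⟪β, β⟫ ≤ ⟪δ, δ⟫)
    (η₁ η₂ : E)
    (hη₁ : η₁ ∈ {α ∈ Δ | δ - α ∈ Δ}) (hη₂ : η₂ ∈ {α ∈ Δ | δ - α ∈ Δ}) :
    η₁ + η₂ ∈ Δ ↔ η₁ + η₂ = δ := by
  obtain ⟨h1, h1'⟩ := hη₁
  obtain ⟨h2, h2'⟩ := hη₂
  have hδ2 : ⟪δ, δ⟫ = 2 := hnorm δ hδ hδlong
  have key : ∀ η : E, η ∈ Δ → δ - η ∈ Δ → ⟪η, δ⟫ = 1 := by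
    intro η hη hη'
    obtain ⟨n, hn⟩ := hint δ hδ η hη
    rw [hδ2] at hn
    have hn' : ⟪η, δ⟫ = (n : ℝ) := by
      field_simp at hn; linarith
    exact key_inner δ η hδ2 n hn' (hlen η hη) (hlen _ hη')
  constructor
  · intro hs
    have hsd : ⟪η₁ + η₂, δ⟫ = 2 := by
      rw [inner_add_left, key η₁ h1 h1', key η₂ h2 h2']; norm_num
    have hss : ⟪η₁ + η₂, η₁ + η₂⟫ ≤ 2 := by
      have := hδlong _ hs; rwa [hδ2] at this
    have hzero : ⟪η₁ + η₂ - δ, η₁ + η₂ - δ⟫ ≤ 0 := by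
      have hexp : ⟪η₁ + η₂ - δ, η₁ + η₂ - δ⟫ =
          ⟪η₁ + η₂, η₁ + η₂⟫ - 2 * ⟪η₁ + η₂, δ⟫ + ⟪δ, δ⟫ := by
        simp only [inner_sub_left, inner_sub_right, real_inner_comm δ (η₁ + η₂)]
        ring
      rw [hexp, hsd, hδ2]; linarith
    have := le_antisymm hzero (real_inner_self_nonneg)
    have h0' : η₁ + η₂ - δ = 0 := inner_self_eq_zero.mp this
    exact sub_eq_zero.mp h0'
  · intro h; rw [h]; exact hδ
end

section
/- Let Δ be an irreducible reduced crystallographic root system, normalized so that every long root has squared length 2, and assume every root α satisfies (α,α) = 1 or (α,α) = 2 (i.e., Δ is not of type G2). Let δ ∈ Δ be a long root and set W_δ = {α ∈ Δ : δ − α ∈ Δ}. If β₀, β₁ ∈ W_δ with β₀ ≠ β₁, then for every root λ ∈ Δ one has β₀ − δ ≠ β₁ − λ. -/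
open scoped RealInnerProductSpace

/-- In an irreducible reduced crystallographic root system
(normalized so long roots have squared length 2, no G₂), if `δ` is a long root and
`β₀ ≠ β₁` both lie in `W_δ = {α ∈ Δ : δ - α ∈ Δ}`, then for every root `lam`
one has `β₀ - δ ≠ β₁ - lam`. -/
theorem Wdelta_difference_ne
    {E : Type*} [NormedAddCommGroup E] [InnerProductSpace ℝ E] [FiniteDimensional ℝ E]
    (Δ : Set E) (hfin : Δ.Finite)
    (hspan : Submodule.span ℝ Δ = ⊤)
    (h0 : (0 : E) ∉ Δ)
    (hred : ∀ α ∈ Δ, ∀ c : ℝ, c • α ∈ Δ → c • α = α ∨ c • α = -α)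
    (hint : ∀ α ∈ Δ, ∀ β ∈ Δ, ∃ n : ℤ, 2 * ⟪β, α⟫ / ⟪α, α⟫ = (n : ℝ))
    (hrefl : ∀ α ∈ Δ, ∀ β ∈ Δ, β - (2 * ⟪β, α⟫ / ⟪α, α⟫) • α ∈ Δ)
    (hirr : ¬ ∃ A B : Set E, A.Nonempty ∧ B.Nonempty ∧ A ∪ B = Δ ∧ A ∩ B = ∅ ∧
      ∀ a ∈ A, ∀ b ∈ B, ⟪a, b⟫ = 0)
    (hnorm : ∀ δ ∈ Δ, (∀ α ∈ Δ, ⟪α, α⟫ ≤ ⟪δ, δ⟫) → ⟪δ, δ⟫ = 2)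
    (hlen : ∀ α ∈ Δ, ⟪α, α⟫ = 1 ∨ ⟪α, α⟫ = 2)
    (δ : E) (hδ : δ ∈ Δ) (hδlong : ∀ β ∈ Δ, ⟪β, β⟫ ≤ ⟪δ, δ⟫)
    (β₀ β₁ : E)
    (hβ₀ : β₀ ∈ {α ∈ Δ | δ - α ∈ Δ}) (hβ₁ : β₁ ∈ {α ∈ Δ | δ - α ∈ Δ})
    (hne : β₀ ≠ β₁) :
    ∀ lam ∈ Δ, β₀ - δ ≠ β₁ - lam := by
  intro lam hlam heq
  obtain ⟨hβ₀Δ, hβ₀'⟩ := hβ₀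
  obtain ⟨hβ₁Δ, hβ₁'⟩ := hβ₁
  have hδδ : ⟪δ, δ⟫ = 2 := hnorm δ hδ hδlong
  have key : ∀ β ∈ Δ, δ - β ∈ Δ → ⟪δ, β⟫ = 1 := by
    intro β hβ hδβ
    obtain ⟨n, hn⟩ := hint δ hδ β hβ
    rw [hδδ] at hn
    have hn' : ⟪β, δ⟫ = (n : ℝ) := by
      field_simp at hn; linarith
    have hb := hlen β hβ
    have hc := hlen _ hδβ
    have hexp : ⟪δ - β, δ - β⟫ = 2 + ⟪β, β⟫ - 2 * ⟪β, δ⟫ := by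
      simp only [inner_sub_left, inner_sub_right, real_inner_comm β δ, hδδ]
      ring
    rw [real_inner_comm, hn']
    rcases hb with hb | hb <;> rcases hc with hc | hc <;>
      rw [hexp, hb, hn'] at hc
    · linarith
    · have h2 : (2 * n : ℤ) = 1 := by exact_mod_cast (by linarith : (2 * (n : ℝ)) = 1)
      omega
    · have h2 : (2 * n : ℤ) = 3 := by exact_mod_cast (by linarith : (2 * (n : ℝ)) = 3)
      omega
    · linarith
  have k0 : ⟪δ, β₀⟫ = 1 := key β₀ hβ₀Δ hβ₀'
  have k1 : ⟪δ, β₁⟫ = 1 := key β₁ hβ₁Δ hβ₁'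
  have hlamdef : lam = δ + (β₁ - β₀) := by
    rw [← sub_eq_zero] at heq ⊢
    rw [← heq]; abel
  have hexp : ⟪lam, lam⟫ = ⟪δ, δ⟫ + ⟪β₁ - β₀, β₁ - β₀⟫ + 2 * ⟪δ, β₁⟫ - 2 * ⟪δ, β₀⟫ := by
    rw [hlamdef]
    simp only [inner_add_left, inner_add_right, inner_sub_left, inner_sub_right,
      real_inner_comm β₁ δ, real_inner_comm β₀ δ]
    ring
  have hle : ⟪lam, lam⟫ ≤ 2 := hδδ ▸ hδlong lam hlam
  have hpos : 0 < ⟪β₁ - β₀, β₁ - β₀⟫ := by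
    rcases lt_or_eq_of_le (real_inner_self_nonneg (x := β₁ - β₀)) with h | h
    · exact h
    · exact absurd (sub_eq_zero.mp (inner_self_eq_zero.mp h.symm)).symm hne
  rw [hexp, hδδ, k0, k1] at hle
  linarith
end

section
/- Let Δ be an irreducible reduced crystallographic root system, normalized so that every long root has squared length 2, and assume every root α satisfies (α,α) = 1 or (α,α) = 2 (i.e., Δ is not of type G2). Let δ ∈ Δ be a long root, set W_δ = {α ∈ Δ : δ − α ∈ Δ}, and let Γ ⊆ Δ be any subset of roots with δ ∈ Γ. Then for α, β ∈ W_δ, the sum α + β belongs to Γ if and only if α + β = δ. -/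
open scoped RealInnerProductSpace

/-! For `x ∈ W_δ` the Cartan integer `2⟪x, δ⟫/⟪δ, δ⟫ = ⟪x, δ⟫` is pinned to `1`, because both
`x` and `δ - x` are nonzero roots of squared length at most
`2 = ‖δ‖²`. Hence `⟪α + β, δ⟫ = ‖δ‖²`, and a vector no longer than `δ` with this inner product
against `δ` is `δ` itself. -/

section InnerProductSpace

variable {E : Type*} [NormedAddCommGroup E] [InnerProductSpace ℝ E]

theorem eq_of_real_inner_eq_inner_self_of_inner_self_le {x y : E}
    (hxy : ⟪x, y⟫ = ⟪y, y⟫) (hle : ⟪x, x⟫ ≤ ⟪y, y⟫) : x = y := by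
  have hdist : ⟪x - y, x - y⟫ = ⟪x, x⟫ - ⟪y, y⟫ := by
    simp only [inner_sub_left, inner_sub_right, real_inner_comm x y, hxy]
    ring
  exact sub_eq_zero.1 (real_inner_self_nonpos.1 (by linarith))

theorem real_inner_eq_one_of_int_of_inner_self_le_two {δ x : E} {n : ℤ}
    (hδ : ⟪δ, δ⟫ = 2) (hn : ⟪x, δ⟫ = n) (hx : x ≠ 0) (hδx : δ - x ≠ 0)
    (hxx : ⟪x, x⟫ ≤ 2) (hδxδx : ⟪δ - x, δ - x⟫ ≤ 2) : ⟪x, δ⟫ = 1 := by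
  have hexp : ⟪δ - x, δ - x⟫ = 2 - 2 * n + ⟪x, x⟫ := by
    simp only [inner_sub_left, inner_sub_right, real_inner_comm x δ, hδ, hn]
    ring
  have hx_pos : 0 < ⟪x, x⟫ := real_inner_self_pos.2 hx
  have hδx_pos : 0 < ⟪δ - x, δ - x⟫ := real_inner_self_pos.2 hδx
  have hn_pos : (0 : ℝ) < n := by linarith
  have hn_lt : (n : ℝ) < 2 := by linarith
  have : n = 1 := by
    have : 0 < n := by exact_mod_cast hn_pos
    have : n < 2 := by exact_mod_cast hn_lt
    omega
  rw [hn, this, Int.cast_one]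

end InnerProductSpace

theorem sum_in_Wdelta_mem_Gamma_iff_general
    {E : Type*} [NormedAddCommGroup E] [InnerProductSpace ℝ E]
    (Δ : Set E)
    (h0 : (0 : E) ∉ Δ)
    (hint : ∀ α ∈ Δ, ∀ β ∈ Δ, ∃ n : ℤ, 2 * ⟪β, α⟫ / ⟪α, α⟫ = (n : ℝ))
    (hnorm : ∀ δ ∈ Δ, (∀ α ∈ Δ, ⟪α, α⟫ ≤ ⟪δ, δ⟫) → ⟪δ, δ⟫ = 2)
    (δ : E) (hδ : δ ∈ Δ) (hδlong : ∀ β ∈ Δ, ⟪β, β⟫ ≤ ⟪δ, δ⟫)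
    (Γ : Set E) (hΓ : Γ ⊆ Δ) (hδΓ : δ ∈ Γ)
    (α β : E)
    (hα : α ∈ {x ∈ Δ | δ - x ∈ Δ}) (hβ : β ∈ {x ∈ Δ | δ - x ∈ Δ}) :
    α + β ∈ Γ ↔ α + β = δ := by
  have hδδ : ⟪δ, δ⟫ = 2 := hnorm δ hδ hδlong
  have hW : ∀ x ∈ {x ∈ Δ | δ - x ∈ Δ}, ⟪x, δ⟫ = 1 := by
    rintro x ⟨hx, hδx⟩
    obtain ⟨n, hn⟩ := hint δ hδ x hx
    refine real_inner_eq_one_of_int_of_inner_self_le_two hδδ (n := n) ?_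
      (fun h ↦ h0 (h ▸ hx)) (fun h ↦ h0 (h ▸ hδx)) (hδδ ▸ hδlong x hx) (hδδ ▸ hδlong _ hδx)
    rw [hδδ] at hn
    linarith
  refine ⟨fun hγ ↦ eq_of_real_inner_eq_inner_self_of_inner_self_le ?_ (hδlong _ (hΓ hγ)),
    fun h ↦ h ▸ hδΓ⟩
  rw [inner_add_left, hW α hα, hW β hβ, hδδ]
  norm_num

/-- In an irreducible reduced crystallographic root system
(normalized so long roots have squared length 2, no G₂), let `δ` be a long root,
`W_δ = {α ∈ Δ : δ - α ∈ Δ}`, and `Γ ⊆ Δ` any subset of roots with `δ ∈ Γ`.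
Then for `α, β ∈ W_δ`, the sum `α + β` belongs to `Γ` iff `α + β = δ`. -/
theorem sum_in_Wdelta_mem_Gamma_iff
    {E : Type*} [NormedAddCommGroup E] [InnerProductSpace ℝ E] [FiniteDimensional ℝ E]
    (Δ : Set E) (hfin : Δ.Finite)
    (hspan : Submodule.span ℝ Δ = ⊤)
    (h0 : (0 : E) ∉ Δ)
    (hred : ∀ α ∈ Δ, ∀ c : ℝ, c • α ∈ Δ → c • α = α ∨ c • α = -α)
    (hint : ∀ α ∈ Δ, ∀ β ∈ Δ, ∃ n : ℤ, 2 * ⟪β, α⟫ / ⟪α, α⟫ = (n : ℝ))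
    (hrefl : ∀ α ∈ Δ, ∀ β ∈ Δ, β - (2 * ⟪β, α⟫ / ⟪α, α⟫) • α ∈ Δ)
    (hirr : ¬ ∃ A B : Set E, A.Nonempty ∧ B.Nonempty ∧ A ∪ B = Δ ∧ A ∩ B = ∅ ∧
      ∀ a ∈ A, ∀ b ∈ B, ⟪a, b⟫ = 0)
    (hnorm : ∀ δ ∈ Δ, (∀ α ∈ Δ, ⟪α, α⟫ ≤ ⟪δ, δ⟫) → ⟪δ, δ⟫ = 2)
    (hlen : ∀ α ∈ Δ, ⟪α, α⟫ = 1 ∨ ⟪α, α⟫ = 2)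
    (δ : E) (hδ : δ ∈ Δ) (hδlong : ∀ β ∈ Δ, ⟪β, β⟫ ≤ ⟪δ, δ⟫)
    (Γ : Set E) (hΓ : Γ ⊆ Δ) (hδΓ : δ ∈ Γ)
    (α β : E)
    (hα : α ∈ {x ∈ Δ | δ - x ∈ Δ}) (hβ : β ∈ {x ∈ Δ | δ - x ∈ Δ}) :
    α + β ∈ Γ ↔ α + β = δ :=
  sum_in_Wdelta_mem_Gamma_iff_general Δ h0 hint hnorm δ hδ hδlong Γ hΓ hδΓ α β hα hβ
end

section
/- Let Δ be a reduced crystallographic root system with base Σ and positive roots Δ⁺. Fix Σ_k ⊆ Σ, let Δ_k be the set of roots that are integer linear combinations of elements of Σ_k, Δ_m = Δ \ Δ_k, and Δ_m⁺ = Δ_m ∩ Δ⁺. For δ ∈ Δ_m⁺ define S_δ = {α ∈ Δ_m⁺ : δ − α ∈ Δ_m⁺}, T_δ = {β ∈ Δ_m⁺ : β = δ or β − δ ∈ Δ⁺} ∪ {α ∈ Δ_m⁺ : δ − α ∈ Δ_k}, and W_δ = {α ∈ Δ : δ − α ∈ Δ}. Then (1/2)|S_δ| + |T_δ| = (1/2)|W_δ|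 + 1. -/
/-!
`ι α = δ - α` is an involution of `W_δ` preserving `S_δ`. For every `α ∈ W_δ \ S_δ` exactly one
of `α`, `ι α` lies in `T_δ`, and `T_δ` is `T_δ ∩ W_δ` together with `δ ∉ W_δ`. Hence
`|W_δ| = |S_δ| + 2 (|T_δ| - 1)`.

The case analysis needs that `Δ⁺` is a positive system of `Δ = -Δ`, closed under sums inside
`Δ`, and that no root `α` of `Δ_k` exceeds `δ`: in `α = (α - δ) + δ`, with both
summands nonnegative combinations of `Σ`, the simple roots outside `Σ_k` could not occur in `δ`,
contradicting `δ ∉ Δ_k`.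
-/

open scoped RealInnerProductSpace

open Set

lemma ncard_eq_ncard_add_two_mul_of_diff_eq_union_image {α : Type*} {S W A : Set α}
    {f : α → α} (hf : f.Injective) (hW : W.Finite) (hSW : S ⊆ W)
    (hcover : W \ S = A ∪ f '' A) (hdisj : Disjoint A (f '' A)) :
    W.ncard = S.ncard + 2 * A.ncard := by
  have hA : A.Finite := hW.sdiff.subset (hcover ▸ subset_union_left)
  rw [← ncard_sdiff_add_ncard_of_subset hSW hW, hcover, ncard_union_eq hdisj hA (hA.image f),
    ncard_image_of_injective A hf]
  ring

section Counting

variable {G : Type*} [AddCommGroup G]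

/-- With `Δ⁺ = P` and `Δ_k = K`, these are `Δ_m⁺`, `S_δ`, `T_δ` and `W_δ`. -/
def posCompl (Δ P K : Set G) : Set G := (Δ \ K) ∩ P

def setS (Δ P K : Set G) (δ : G) : Set G := {α ∈ posCompl Δ P K | δ - α ∈ posCompl Δ P K}

def setT (Δ P K : Set G) (δ : G) : Set G :=
  {β ∈ posCompl Δ P K | β = δ ∨ β - δ ∈ P} ∪ {α ∈ posCompl Δ P K | δ - α ∈ K}

def setW (Δ : Set G) (δ : G) : Set G := {α ∈ Δ | δ - α ∈ Δ}

variable {Δ P K : Set G} {δ α : G}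

lemma sub_mem_setS (hα : α ∈ setS Δ P K δ) : δ - α ∈ setS Δ P K δ :=
  ⟨hα.2, by simpa using hα.1⟩

lemma sub_mem_setW (hα : α ∈ setW Δ δ) : δ - α ∈ setW Δ δ :=
  ⟨hα.2, by simpa using hα.1⟩

lemma setS_subset_setW : setS Δ P K δ ⊆ setW Δ δ :=
  fun _ hα ↦ ⟨hα.1.1.1, hα.2.1.1⟩

lemma setT_subset_posCompl : setT Δ P K δ ⊆ posCompl Δ P K := by
  rintro β (hβ | hβ) <;> exact hβ.1

lemma disjoint_setS_setT (h0 : (0 : G) ∉ Δ) (hPneg : ∀ α ∈ P, -α ∉ P) :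
    Disjoint (setS Δ P K δ) (setT Δ P K δ) := by
  rw [Set.disjoint_left]
  rintro α ⟨-, ⟨⟨hδα, hδαK⟩, hδαP⟩⟩ ((⟨-, rfl | hαδ⟩) | ⟨-, hK⟩)
  · exact h0 (by simpa using hδα)
  · exact hPneg _ hαδ (by simpa using hδαP)
  · exact hδαK hK

lemma disjoint_setT_inter_setW_image (h0 : (0 : G) ∉ Δ) (hPneg : ∀ α ∈ P, -α ∉ P) :
    Disjoint (setT Δ P K δ ∩ setW Δ δ) ((δ - ·) '' (setT Δ P K δ ∩ setW Δ δ)) := by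
  rw [Set.disjoint_left]
  rintro _ ⟨hT, -⟩ ⟨β, ⟨hβT, -⟩, rfl⟩
  have hβS : β ∈ setS Δ P K δ := ⟨setT_subset_posCompl hβT, setT_subset_posCompl hT⟩
  exact (disjoint_setS_setT h0 hPneg).notMem_of_mem_left hβS hβT

lemma mem_setT_or_sub_mem_setT (hneg : ∀ α ∈ Δ, -α ∈ Δ) (hPΔ : P ⊆ Δ)
    (hP : ∀ α ∈ Δ, α ∉ P → -α ∈ P) (hPneg : ∀ α ∈ P, -α ∉ P)
    (hPadd : ∀ α ∈ P, ∀ β ∈ P, α + β ∈ Δ → α + β ∈ P)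
    (hK : ∀ α ∈ K, δ - α ∉ K) (hKP : ∀ α ∈ K, α - δ ∉ P) (hδ : δ ∈ P)
    (hαW : α ∈ setW Δ δ) (hαS : α ∉ setS Δ P K δ) :
    α ∈ setT Δ P K δ ∨ δ - α ∈ setT Δ P K δ := by
  obtain ⟨hα, hδα⟩ := hαW
  by_cases hαP : α ∈ P <;> by_cases hδαP : δ - α ∈ P
  · by_cases hαK : α ∈ K
    · exact Or.inr (Or.inr ⟨⟨⟨hδα, hK α hαK⟩, hδαP⟩, by simpa using hαK⟩)
    · by_cases hδαK : δ - α ∈ K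
      · exact Or.inl (Or.inr ⟨⟨⟨hα, hαK⟩, hαP⟩, hδαK⟩)
      · exact absurd ⟨⟨⟨hα, hαK⟩, hαP⟩, ⟨⟨hδα, hδαK⟩, hδαP⟩⟩ hαS
  · have hαδ : α - δ ∈ P := by simpa using hP _ hδα hδαP
    exact Or.inl (Or.inl ⟨⟨⟨hα, fun hαK ↦ hKP α hαK hαδ⟩, hαP⟩, Or.inr hαδ⟩)
  · have hαδ : δ - α - δ ∈ P := by simpa using hP _ hα hαP
    exact Or.inr (Or.inl ⟨⟨⟨hδα, fun hK' ↦ hKP _ hK' hαδ⟩, hδαP⟩, Or.inr hαδ⟩)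
  · have hsum := hPadd _ (hP _ hα hαP) _ (hP _ hδα hδαP)
    rw [show -α + -(δ - α) = -δ by abel] at hsum
    exact absurd (hsum (hneg δ (hPΔ hδ))) (hPneg δ hδ)

lemma setW_diff_setS (h0 : (0 : G) ∉ Δ) (hneg : ∀ α ∈ Δ, -α ∈ Δ) (hPΔ : P ⊆ Δ)
    (hP : ∀ α ∈ Δ, α ∉ P → -α ∈ P) (hPneg : ∀ α ∈ P, -α ∉ P)
    (hPadd : ∀ α ∈ P, ∀ β ∈ P, α + β ∈ Δ → α + β ∈ P)
    (hK : ∀ α ∈ K, δ - α ∉ K) (hKP : ∀ α ∈ K, α - δ ∉ P) (hδ : δ ∈ P) :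
    setW Δ δ \ setS Δ P K δ =
      (setT Δ P K δ ∩ setW Δ δ) ∪ (δ - ·) '' (setT Δ P K δ ∩ setW Δ δ) := by
  ext α
  constructor
  · rintro ⟨hαW, hαS⟩
    rcases mem_setT_or_sub_mem_setT hneg hPΔ hP hPneg hPadd hK hKP hδ hαW hαS with hT | hT
    · exact Or.inl ⟨hT, hαW⟩
    · exact Or.inr ⟨δ - α, ⟨hT, sub_mem_setW hαW⟩, sub_sub_cancel δ α⟩
  · have hST := disjoint_setS_setT (K := K) (δ := δ) h0 hPneg
    rintro (⟨hαT, hαW⟩ | ⟨β, ⟨hβT, hβW⟩, rfl⟩)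
    · exact ⟨hαW, hST.notMem_of_mem_right hαT⟩
    · refine ⟨sub_mem_setW hβW, fun hS ↦ hST.notMem_of_mem_right hβT ?_⟩
      simpa using sub_mem_setS hS

lemma setT_eq_insert (hneg : ∀ α ∈ Δ, -α ∈ Δ) (hPΔ : P ⊆ Δ) (hKΔ : K ⊆ Δ)
    (hδ : δ ∈ posCompl Δ P K) :
    setT Δ P K δ = insert δ (setT Δ P K δ ∩ setW Δ δ) := by
  ext β
  constructor
  · intro hβT
    rcases eq_or_ne β δ with rfl | hβδ
    · exact Or.inl rfl
    refine Or.inr ⟨hβT, (setT_subset_posCompl hβT).1.1, ?_⟩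
    rcases hβT with ⟨-, rfl | hβδP⟩ | ⟨-, hδβK⟩
    · exact absurd rfl hβδ
    · simpa using hneg _ (hPΔ hβδP)
    · exact hKΔ hδβK
  · rintro (rfl | ⟨hβT, -⟩)
    · exact Or.inl ⟨hδ, Or.inl rfl⟩
    · exact hβT

theorem ncard_setS_div_two_add_ncard_setT (hfin : Δ.Finite) (h0 : (0 : G) ∉ Δ)
    (hneg : ∀ α ∈ Δ, -α ∈ Δ) (hPΔ : P ⊆ Δ) (hP : ∀ α ∈ Δ, α ∉ P → -α ∈ P)
    (hPneg : ∀ α ∈ P, -α ∉ P) (hPadd : ∀ α ∈ P, ∀ β ∈ P, α + β ∈ Δ → α + β ∈ P)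
    (hKΔ : K ⊆ Δ) (hK : ∀ α ∈ K, δ - α ∉ K) (hKP : ∀ α ∈ K, α - δ ∉ P)
    (hδ : δ ∈ posCompl Δ P K) :
    ((setS Δ P K δ).ncard : ℚ) / 2 + (setT Δ P K δ).ncard = (setW Δ δ).ncard / 2 + 1 := by
  have hWfin : (setW Δ δ).Finite := hfin.subset (sep_subset _ _)
  have hW := ncard_eq_ncard_add_two_mul_of_diff_eq_union_image (sub_right_injective (G := G))
    hWfin setS_subset_setW
    (setW_diff_setS h0 hneg hPΔ hP hPneg hPadd hK hKP hδ.2)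
    (disjoint_setT_inter_setW_image h0 hPneg)
  have hT := congrArg ncard (setT_eq_insert hneg hPΔ hKΔ hδ)
  rw [ncard_insert_of_notMem (fun h ↦ h0 (by simpa using h.2.2))
    (hWfin.subset inter_subset_right)] at hT
  rw [hW, hT]
  push_cast
  ring

end Counting

section IntegerCombination

variable {E : Type*} [AddCommGroup E] {s t : Finset E} {x y : E}

def IsNonnegIntComb (s : Finset E) (x : E) : Prop :=
  ∃ c : E → ℤ, (∀ σ ∈ s, 0 ≤ c σ) ∧ x = ∑ σ ∈ s, c σ • σ

lemma IsNonnegIntComb.add (hx : IsNonnegIntComb s x) (hy : IsNonnegIntComb s y) :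
    IsNonnegIntComb s (x + y) := by
  obtain ⟨a, ha, rfl⟩ := hx
  obtain ⟨b, hb, rfl⟩ := hy
  refine ⟨a + b, fun σ hσ ↦ add_nonneg (ha σ hσ) (hb σ hσ), ?_⟩
  simp only [Pi.add_apply, add_zsmul, Finset.sum_add_distrib]

lemma isNonnegIntComb_or_neg
    (h : ∃ c : E → ℤ, ((∀ σ ∈ s, 0 ≤ c σ) ∨ (∀ σ ∈ s, c σ ≤ 0)) ∧ x = ∑ σ ∈ s, c σ • σ) :
    IsNonnegIntComb s x ∨ IsNonnegIntComb s (-x) := by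
  obtain ⟨c, hc | hc, rfl⟩ := h
  · exact Or.inl ⟨c, hc, rfl⟩
  · refine Or.inr ⟨-c, fun σ hσ ↦ neg_nonneg.mpr (hc σ hσ), ?_⟩
    simp only [Pi.neg_apply, neg_zsmul, Finset.sum_neg_distrib]

lemma mem_span_int_finset_iff :
    x ∈ Submodule.span ℤ (s : Set E) ↔ ∃ c : E → ℤ, x = ∑ σ ∈ s, c σ • σ := by
  constructor
  · intro h
    obtain ⟨c, -, rfl⟩ := Submodule.mem_span_finset.mp h
    exact ⟨c, rfl⟩
  · rintro ⟨c, rfl⟩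
    exact Submodule.sum_mem _ fun σ hσ ↦ Submodule.smul_mem _ _ (Submodule.subset_span hσ)

lemma IsNonnegIntComb.mem_span_of_add_mem_span (hs : LinearIndepOn ℤ id (s : Set E))
    (hts : t ⊆ s) (hx : IsNonnegIntComb s x) (hy : IsNonnegIntComb s y)
    (hxy : x + y ∈ Submodule.span ℤ (t : Set E)) : y ∈ Submodule.span ℤ (t : Set E) := by
  classical
  obtain ⟨a, ha, rfl⟩ := hx
  obtain ⟨b, hb, rfl⟩ := hy
  obtain ⟨c, hc⟩ := mem_span_int_finset_iff.mp hxy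
  have hcoeff := linearIndepOn_finset_iffₛ.mp hs (a + b) (fun σ ↦ if σ ∈ t then c σ else 0) (by
    simp only [id, Pi.add_apply, add_zsmul, Finset.sum_add_distrib, ite_smul, zero_smul,
      Finset.sum_ite_mem, Finset.inter_eq_right.mpr hts, hc])
  have hb0 : ∀ σ ∈ s, σ ∉ t → b σ = 0 := fun σ hσ hσt ↦ by
    have := hcoeff σ hσ
    simp only [Pi.add_apply, hσt, if_false] at this
    linarith [ha σ hσ, hb σ hσ]
  refine mem_span_int_finset_iff.mpr ⟨b, (Finset.sum_subset hts fun σ hσ hσt ↦ ?_).symm⟩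
  rw [hb0 σ hσ hσt, zero_zsmul]

lemma IsNonnegIntComb.eq_zero_of_neg (hs : LinearIndepOn ℤ id (s : Set E))
    (hx : IsNonnegIntComb s x) (hnx : IsNonnegIntComb s (-x)) : x = 0 := by
  have h := hx.mem_span_of_add_mem_span hs (Finset.empty_subset s) hnx (by simp)
  simpa using h

end IntegerCombination

lemma sub_two_mul_inner_self_div_smul_self {E : Type*} [NormedAddCommGroup E]
    [InnerProductSpace ℝ E] {α : E} (hα : α ≠ 0) : α - (2 * ⟪α, α⟫ / ⟪α, α⟫) • α = -α := by
  rw [mul_div_assoc, div_self (inner_self_ne_zero.mpr hα), mul_one, two_smul]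
  abel

theorem half_S_add_T_eq_half_W_add_one_general
    {E : Type*} [NormedAddCommGroup E] [InnerProductSpace ℝ E]
    (Δ : Set E) (hfin : Δ.Finite)
    (h0 : (0 : E) ∉ Δ)
    (hrefl : ∀ α ∈ Δ, ∀ β ∈ Δ, β - (2 * ⟪β, α⟫ / ⟪α, α⟫) • α ∈ Δ)
    (Sig : Finset E)
    (hSigind : LinearIndependent ℝ (fun x : {x // x ∈ Sig} => (x : E)))
    (hbase : ∀ α ∈ Δ, ∃ c : E → ℤ,
      ((∀ σ ∈ Sig, 0 ≤ c σ) ∨ (∀ σ ∈ Sig, c σ ≤ 0)) ∧ α = ∑ σ ∈ Sig, c σ • σ)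
    (Sk : Finset E) (hSk : Sk ⊆ Sig)
    (Δpos Δk Δm Δmpos : Set E)
    (hΔpos : Δpos = {α ∈ Δ | ∃ c : E → ℤ,
      (∀ σ ∈ Sig, 0 ≤ c σ) ∧ α = ∑ σ ∈ Sig, c σ • σ})
    (hΔk : Δk = {α ∈ Δ | ∃ c : E → ℤ, α = ∑ σ ∈ Sk, c σ • σ})
    (hΔm : Δm = Δ \ Δk)
    (hΔmpos : Δmpos = Δm ∩ Δpos)
    (δ : E) (hδ : δ ∈ Δmpos)
    (S T W : Set E)
    (hS : S = {α ∈ Δmpos | δ - α ∈ Δmpos})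
    (hT : T = {β ∈ Δmpos | β = δ ∨ β - δ ∈ Δpos} ∪ {α ∈ Δmpos | δ - α ∈ Δk})
    (hW : W = {α ∈ Δ | δ - α ∈ Δ}) :
    (S.ncard : ℚ) / 2 + (T.ncard : ℚ) = (W.ncard : ℚ) / 2 + 1 := by
  subst hS hT hW hΔmpos hΔm hΔpos hΔk
  have hneg (α : E) (hα : α ∈ Δ) : -α ∈ Δ :=
    sub_two_mul_inner_self_div_smul_self (ne_of_mem_of_not_mem hα h0) ▸ hrefl α hα α hα
  have hSigℤ : LinearIndepOn ℤ id (Sig : Set E) := hSigind.restrict_scalars' ℤ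
  obtain ⟨⟨hδΔ, hδk⟩, -, hδpos⟩ := hδ
  refine ncard_setS_div_two_add_ncard_setT hfin h0 hneg (sep_subset _ _) ?_ ?_ ?_
    (sep_subset _ _) ?_ ?_ ⟨⟨hδΔ, hδk⟩, hδΔ, hδpos⟩
  · intro α hα hαpos
    exact ⟨hneg α hα, (isNonnegIntComb_or_neg (hbase α hα)).resolve_left (hαpos ⟨hα, ·⟩)⟩
  · rintro α ⟨hα, hαpos⟩ ⟨-, hnαpos⟩
    exact ne_of_mem_of_not_mem hα h0 (IsNonnegIntComb.eq_zero_of_neg hSigℤ hαpos hnαpos)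
  · rintro α ⟨-, hαpos⟩ β ⟨-, hβpos⟩ hαβ
    exact ⟨hαβ, IsNonnegIntComb.add hαpos hβpos⟩
  · rintro α ⟨-, hαk⟩ ⟨-, hδαk⟩
    refine hδk ⟨hδΔ, mem_span_int_finset_iff.mp ?_⟩
    simpa using add_mem (mem_span_int_finset_iff.mpr hαk) (mem_span_int_finset_iff.mpr hδαk)
  · rintro α ⟨-, hαk⟩ ⟨-, hαδpos⟩
    refine hδk ⟨hδΔ, mem_span_int_finset_iff.mp ?_⟩
    exact IsNonnegIntComb.mem_span_of_add_mem_span hSigℤ hSk hαδpos hδpos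
      (by simpa using mem_span_int_finset_iff.mpr hαk)

/-- Let `Δ` be a reduced crystallographic root system with base
`Sig` and positive roots `Δpos`. For `Sk ⊆ Sig`, let `Δk` be the roots that are
integer combinations of `Sk`, `Δm = Δ \ Δk`, `Δmpos = Δm ∩ Δpos`. For `δ ∈ Δmpos`
let `S_δ = {α ∈ Δmpos : δ - α ∈ Δmpos}`,
`T_δ = {β ∈ Δmpos : β = δ ∨ β - δ ∈ Δpos} ∪ {α ∈ Δmpos : δ - α ∈ Δk}` and
`W_δ = {α ∈ Δ : δ - α ∈ Δ}`. Then `(1/2)|S_δ| + |T_δ| = (1/2)|W_δ| + 1`. -/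
theorem half_S_add_T_eq_half_W_add_one
    {E : Type*} [NormedAddCommGroup E] [InnerProductSpace ℝ E] [FiniteDimensional ℝ E]
    (Δ : Set E) (hfin : Δ.Finite)
    (hspan : Submodule.span ℝ Δ = ⊤)
    (h0 : (0 : E) ∉ Δ)
    (hred : ∀ α ∈ Δ, ∀ c : ℝ, c • α ∈ Δ → c • α = α ∨ c • α = -α)
    (hint : ∀ α ∈ Δ, ∀ β ∈ Δ, ∃ n : ℤ, 2 * ⟪β, α⟫ / ⟪α, α⟫ = (n : ℝ))
    (hrefl : ∀ α ∈ Δ, ∀ β ∈ Δ, β - (2 * ⟪β, α⟫ / ⟪α, α⟫) • α ∈ Δ)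
    (Sig : Finset E) (hSigΔ : (Sig : Set E) ⊆ Δ)
    (hSigind : LinearIndependent ℝ (fun x : {x // x ∈ Sig} => (x : E)))
    (hSigspan : Submodule.span ℝ (Sig : Set E) = Submodule.span ℝ Δ)
    (hbase : ∀ α ∈ Δ, ∃ c : E → ℤ,
      ((∀ σ ∈ Sig, 0 ≤ c σ) ∨ (∀ σ ∈ Sig, c σ ≤ 0)) ∧ α = ∑ σ ∈ Sig, c σ • σ)
    (Sk : Finset E) (hSk : Sk ⊆ Sig)
    (Δpos Δk Δm Δmpos : Set E)
    (hΔpos : Δpos = {α ∈ Δ | ∃ c : E → ℤ,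
      (∀ σ ∈ Sig, 0 ≤ c σ) ∧ α = ∑ σ ∈ Sig, c σ • σ})
    (hΔk : Δk = {α ∈ Δ | ∃ c : E → ℤ, α = ∑ σ ∈ Sk, c σ • σ})
    (hΔm : Δm = Δ \ Δk)
    (hΔmpos : Δmpos = Δm ∩ Δpos)
    (δ : E) (hδ : δ ∈ Δmpos)
    (S T W : Set E)
    (hS : S = {α ∈ Δmpos | δ - α ∈ Δmpos})
    (hT : T = {β ∈ Δmpos | β = δ ∨ β - δ ∈ Δpos} ∪ {α ∈ Δmpos | δ - α ∈ Δk})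
    (hW : W = {α ∈ Δ | δ - α ∈ Δ}) :
    (S.ncard : ℚ) / 2 + (T.ncard : ℚ) = (W.ncard : ℚ) / 2 + 1 :=
  half_S_add_T_eq_half_W_add_one_general Δ hfin h0 hrefl Sig hSigind hbase Sk hSk Δpos Δk Δm Δmpos
    hΔpos hΔk hΔm hΔmpos δ hδ S T W hS hT hW
end
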